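/- Let n ≥ 1 and 1 ≤ t ≤ n+1. Then Alice(T_n(t)) holds if and only if t ≤ ⌈n/2⌉. -/

import Mathlib

/-- The board `[n] = {1, …, n}` as a finite set of natural numbers. -/
def board (n : ℕ) : Finset ℕ := Finset.Icc 1 n

/-- The order-preserving relabelling of `[n] \ {x}` onto `[n-1]`:
elements below `x` are unchanged, elements above `x` drop by one. -/
def stdElt (x r : ℕ) : ℕ := if r < x then r else r - 1

/-- Standardise a set avoiding `x`: relabel it via `stdElt x`. -/
def stdSet (x : ℕ) (S : Finset ℕ) : Finset ℕ := S.image (stdElt x)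

/-- The standardised section `F_x^+ = { S \ {x} : x ∈ S ∈ F }`,
viewed as a family of subsets of `[n-1]`. -/
def secPlus (F : Set (Finset ℕ)) (x : ℕ) : Set (Finset ℕ) :=
  {T | ∃ S ∈ F, x ∈ S ∧ T = stdSet x (S.erase x)}

/-- The standardised section `F_x^- = { S ∈ F : x ∉ S }`,
viewed as a family of subsets of `[n-1]`. -/
def secMinus (F : Set (Finset ℕ)) (x : ℕ) : Set (Finset ℕ) :=
  {T | ∃ S ∈ F, x ∉ S ∧ T = stdSet x S}

mutual
  /-- `AliceWins n k F`: Alice wins her `F`-game, where `F` is a family of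
  `k`-subsets of `[n]`.  Terminal games (`k = 0` or `k = n`) are won iff `F`
  is nonempty; otherwise Alice needs a first offer `x` such that Bob wins both
  his `F_x^+`-game and his `F_x^-`-game. -/
  def AliceWins (n k : ℕ) (F : Set (Finset ℕ)) : Prop :=
    if h : k = 0 ∨ n ≤ k then F.Nonempty
    else ∃ x ∈ board n,
      BobWins (n - 1) (k - 1) (secPlus F x) ∧ BobWins (n - 1) k (secMinus F x)
  termination_by n
  decreasing_by all_goals omega

  /-- `BobWins n k F`: Bob wins his `F`-game, where `F` is a family of
  `k`-subsets of `[n]`.  Terminal games (`k = 0` or `k = n`) are won iff `F`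
  is nonempty; otherwise Bob needs, for every first offer `x`, that Alice wins
  her `F_x^+`-game or her `F_x^-`-game. -/
  def BobWins (n k : ℕ) (F : Set (Finset ℕ)) : Prop :=
    if h : k = 0 ∨ n ≤ k then F.Nonempty
    else ∀ x ∈ board n,
      AliceWins (n - 1) (k - 1) (secPlus F x) ∨ AliceWins (n - 1) k (secMinus F x)
  termination_by n
  decreasing_by all_goals omega
end

/-- `S ⪯ T` in the pointwise order: the increasing enumerations of `S` and `T`
have the same length and are pointwise `≤`. -/
def PointwiseLE (S T : Finset ℕ) : Prop :=
  List.Forall₂ (· ≤ ·) (S.sort (· ≤ ·)) (T.sort (· ≤ ·))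

/-- `F` consists of `k`-element subsets of `[n]`. -/
def IsFamilyOn (n k : ℕ) (F : Set (Finset ℕ)) : Prop :=
  ∀ S ∈ F, S ⊆ board n ∧ S.card = k

/-- `F` is pointwise-increasing as a family of `k`-subsets of `[n]`:
it is upwards closed in the pointwise order. -/
def IsIncreasingFamily (n k : ℕ) (F : Set (Finset ℕ)) : Prop :=
  ∀ S T : Finset ℕ, S ∈ F → T ⊆ board n → T.card = k → PointwiseLE S T → T ∈ F

/-!
For `k = 1`, taking the first offered element `x` into the set ends the game, which is then won
iff `t ≤ x ≤ n`; leaving it out continues on `T_{n-1}(t)` if `t ≤ x` and on `T_{n-1}(t-1)` if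
`x < t`. So Alice's best offer is `x = t`, the hardest one for Bob is `x = 1`, and by induction
`Alice(T_n(t)) ↔ t ≤ ⌈n/2⌉` together with `Bob(T_n(t)) ↔ t ≤ ⌊n/2⌋ + 1`.
-/

def singletonFamily (n t : ℕ) : Set (Finset ℕ) :=
  {S : Finset ℕ | ∃ r : ℕ, t ≤ r ∧ r ≤ n ∧ S = {r}}

section UnitGames

variable {n : ℕ} {F : Set (Finset ℕ)}

lemma aliceWins_zero : AliceWins n 0 F ↔ F.Nonempty := by
  rw [AliceWins, dif_pos (Or.inl rfl)]

lemma bobWins_zero : BobWins n 0 F ↔ F.Nonempty := by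
  rw [BobWins, dif_pos (Or.inl rfl)]

lemma aliceWins_one_of_le_one (hn : n ≤ 1) : AliceWins n 1 F ↔ F.Nonempty := by
  rw [AliceWins, dif_pos (Or.inr hn)]

lemma bobWins_one_of_le_one (hn : n ≤ 1) : BobWins n 1 F ↔ F.Nonempty := by
  rw [BobWins, dif_pos (Or.inr hn)]

lemma aliceWins_one_iff (hn : 2 ≤ n) :
    AliceWins n 1 F ↔
      ∃ x ∈ board n, (secPlus F x).Nonempty ∧ BobWins (n - 1) 1 (secMinus F x) := by
  rw [AliceWins, dif_neg (by omega)]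
  simp only [Nat.sub_self, bobWins_zero]

lemma bobWins_one_iff (hn : 2 ≤ n) :
    BobWins n 1 F ↔
      ∀ x ∈ board n, (secPlus F x).Nonempty ∨ AliceWins (n - 1) 1 (secMinus F x) := by
  rw [BobWins, dif_neg (by omega)]
  simp only [Nat.sub_self, aliceWins_zero]

end UnitGames

section SingletonFamily

variable {n t x : ℕ}

lemma singletonFamily_nonempty_iff : (singletonFamily n t).Nonempty ↔ t ≤ n := by
  constructor
  · rintro ⟨S, r, htr, hrn, rfl⟩
    omega
  · intro htn
    exact ⟨{t}, t, le_rfl, htn, rfl⟩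

lemma secPlus_singletonFamily_nonempty_iff :
    (secPlus (singletonFamily n t) x).Nonempty ↔ t ≤ x ∧ x ≤ n := by
  constructor
  · rintro ⟨T, S, ⟨r, htr, hrn, rfl⟩, hx, -⟩
    rw [Finset.mem_singleton] at hx
    omega
  · rintro ⟨htx, hxn⟩
    refine ⟨∅, {x}, ⟨x, htx, hxn, rfl⟩, Finset.mem_singleton_self x, ?_⟩
    simp [stdSet]

lemma stdElt_ite_lt_succ (x r : ℕ) : stdElt x (if r < x then r else r + 1) = r := by
  unfold stdElt
  split_ifs <;> omega

lemma secMinus_singletonFamily (hx : x ∈ board n) :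
    secMinus (singletonFamily n t) x = singletonFamily (n - 1) (if x < t then t - 1 else t) := by
  obtain ⟨hx1, hxn⟩ := Finset.mem_Icc.mp hx
  ext T
  simp only [secMinus, singletonFamily, Set.mem_ofPred_eq]
  constructor
  · rintro ⟨S, ⟨r, htr, hrn, rfl⟩, hxr, rfl⟩
    rw [Finset.mem_singleton] at hxr
    refine ⟨stdElt x r, ?_, ?_, by simp [stdSet]⟩ <;>
    · unfold stdElt
      split_ifs <;> omega
  · rintro ⟨r, htr, hrn, rfl⟩
    refine ⟨{if r < x then r else r + 1}, ⟨_, by grind, by grind, rfl⟩, by grind, ?_⟩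
    simp [stdSet, stdElt_ite_lt_succ]

lemma aliceWins_singletonFamily_iff_of_bobWins (hn : 2 ≤ n) (ht : 1 ≤ t)
    (hbob : ∀ s, 1 ≤ s →
      (BobWins (n - 1) 1 (singletonFamily (n - 1) s) ↔ s ≤ (n - 1) / 2 + 1)) :
    AliceWins n 1 (singletonFamily n t) ↔ t ≤ (n + 1) / 2 := by
  rw [aliceWins_one_iff hn]
  constructor
  · rintro ⟨x, hx, hplus, hminus⟩
    obtain ⟨htx, -⟩ := secPlus_singletonFamily_nonempty_iff.mp hplus
    rw [secMinus_singletonFamily hx, if_neg (by omega), hbob t ht] at hminus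
    omega
  · intro htn
    have ht_mem : t ∈ board n := Finset.mem_Icc.mpr ⟨ht, by omega⟩
    refine ⟨t, ht_mem, secPlus_singletonFamily_nonempty_iff.mpr ⟨le_rfl, by omega⟩, ?_⟩
    rw [secMinus_singletonFamily ht_mem, if_neg (lt_irrefl t), hbob t ht]
    omega

lemma bobWins_singletonFamily_iff_of_aliceWins (hn : 1 ≤ n) (ht : 1 ≤ t)
    (halice : ∀ s, 1 ≤ s →
      (AliceWins (n - 1) 1 (singletonFamily (n - 1) s) ↔ s ≤ n / 2)) :
    BobWins n 1 (singletonFamily n t) ↔ t ≤ n / 2 + 1 := by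
  rcases Nat.lt_or_ge n 2 with hn1 | hn2
  · rw [bobWins_one_of_le_one (by omega), singletonFamily_nonempty_iff]
    omega
  rw [bobWins_one_iff hn2]
  constructor
  · intro hall
    by_contra! htn
    have one_mem : 1 ∈ board n := Finset.mem_Icc.mpr ⟨le_rfl, by omega⟩
    rcases hall 1 one_mem with hplus | hminus
    · have := secPlus_singletonFamily_nonempty_iff.mp hplus
      omega
    · rw [secMinus_singletonFamily one_mem, if_pos (by omega), halice (t - 1) (by omega)] at hminus
      omega
  · intro htn x hx
    obtain ⟨hx1, hxn⟩ := Finset.mem_Icc.mp hx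
    by_cases htx : t ≤ x
    · exact .inl (secPlus_singletonFamily_nonempty_iff.mpr ⟨htx, hxn⟩)
    · rw [secMinus_singletonFamily hx, if_pos (by omega), halice (t - 1) (by omega)]
      omega

theorem aliceWins_singletonFamily_iff (ht : 1 ≤ t) :
    AliceWins n 1 (singletonFamily n t) ↔ t ≤ (n + 1) / 2 := by
  induction n using Nat.strong_induction_on generalizing t with
  | _ n ih =>
  rcases Nat.lt_or_ge n 2 with hn1 | hn2
  · rw [aliceWins_one_of_le_one (by omega), singletonFamily_nonempty_iff]
    omega
  refine aliceWins_singletonFamily_iff_of_bobWins hn2 ht fun s hs ↦ ?_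
  refine bobWins_singletonFamily_iff_of_aliceWins (by omega) hs fun r hr ↦ ?_
  rw [ih (n - 1 - 1) (by omega) hr]
  omega

end SingletonFamily

/-- Alice wins her game on the singleton family
`T_n(t) = { {r} : t ≤ r ≤ n }` if and only if `t ≤ ⌈n/2⌉`. -/
theorem alice_singleton_family (n t : ℕ) (hn : 1 ≤ n) (ht1 : 1 ≤ t) (ht : t ≤ n + 1) :
    AliceWins n 1 {S : Finset ℕ | ∃ r : ℕ, t ≤ r ∧ r ≤ n ∧ S = {r}} ↔
      t ≤ (n + 1) / 2 :=
  aliceWins_singletonFamily_iff ht1
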